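/- Let T be a stopping time for the birth–death chain with E[T] < ∞. Then E[X_T] = k + Σ_{n=1}^{∞} E[G_T^n](r_n − l_n), where G_T^n is the number of times m with 0 ≤ m ≤ T−1 and X_m = n. -/

import Mathlib

/-!
Telescoping gives `X_T - X_0 = ∑_{m < T} (X_{m+1} - X_m)`. The event `{m < T, X_m = n}` is
determined by `X_0, …, X_m`, so by the Markov property the increment integrates over it to
`(r_n - l_n) P(m < T, X_m = n)` when `n ≥ 1`, and to `0` when `n = 0`, which is absorbing.
Summing over `m` and `n` and swapping the two sums gives the claim, since
`∑_m P(m < T, X_m = n) = E[G_T^n]`. Both the exchange of sum and integral and the swap are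
justified by `|X_{m+1} - X_m| ≤ 1` and `∑_{m,n} P(m < T, X_m = n) = E[T] < ∞`.
-/

open MeasureTheory Filter Topology Finset
open scoped ENNReal NNReal Classical

/-- Partial products `t_n = (l_1 ⋯ l_n)/(r_1 ⋯ r_n)`, with `t_0 = 1`. -/
noncomputable def tp (l r : ℕ → ℝ) (n : ℕ) : ℝ :=
  (∏ i ∈ Finset.Icc 1 n, l i) / (∏ i ∈ Finset.Icc 1 n, r i)

/-- `x_n = Σ_{i=0}^{n-1} t_i`. -/
noncomputable def xp (l r : ℕ → ℝ) (n : ℕ) : ℝ :=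
  ∑ i ∈ Finset.range n, tp l r i

/-- The natural filtration of the process `X` (σ-algebra generated by `X_0, …, X_m`). -/
def natFilt {Ω : Type*} (X : ℕ → Ω → ℕ) (m : ℕ) : MeasurableSpace Ω :=
  ⨆ i ∈ Finset.range (m + 1), MeasurableSpace.comap (X i) ⊤

/-- A birth–death chain on ℕ started at `k`, with up–probabilities `r n` and
down–probabilities `l n` for states `n ≥ 1`, and `0` absorbing.  The Markov
property is encoded by conditioning on arbitrary events of the natural filtration. -/
structure IsBDChain {Ω : Type*} [MeasurableSpace Ω] (P : Measure Ω)
    (X : ℕ → Ω → ℕ) (k : ℕ) (l r : ℕ → ℝ) : Prop where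
  isProb : IsProbabilityMeasure P
  one_le_k : 1 ≤ k
  l_pos : ∀ n, 1 ≤ n → 0 < l n
  r_pos : ∀ n, 1 ≤ n → 0 < r n
  lr_one : ∀ n, 1 ≤ n → l n + r n = 1
  meas : ∀ m, Measurable (X m)
  init : ∀ᵐ ω ∂P, X 0 ω = k
  absorb : ∀ᵐ ω ∂P, ∀ m, X m ω = 0 → X (m + 1) ω = 0
  step_up : ∀ m n, 1 ≤ n → ∀ A : Set Ω, MeasurableSet[natFilt X m] A →
    P (A ∩ {ω | X m ω = n ∧ X (m + 1) ω = n + 1}) =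
      ENNReal.ofReal (r n) * P (A ∩ {ω | X m ω = n})
  step_down : ∀ m n, 1 ≤ n → ∀ A : Set Ω, MeasurableSet[natFilt X m] A →
    P (A ∩ {ω | X m ω = n ∧ X (m + 1) ω = n - 1}) =
      ENNReal.ofReal (l n) * P (A ∩ {ω | X m ω = n})

/-- A (finite-valued) stopping time for the natural filtration of `X`. -/
def IsBDStop {Ω : Type*} (X : ℕ → Ω → ℕ) (T : Ω → ℕ) : Prop :=
  ∀ m, MeasurableSet[natFilt X m] {ω | T ω = m}

/-- An extended-ℕ-valued stopping time for the natural filtration of `X`. -/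
def IsBDStopE {Ω : Type*} (X : ℕ → Ω → ℕ) (T : Ω → ℕ∞) : Prop :=
  ∀ m : ℕ, MeasurableSet[natFilt X m] {ω | T ω = (m : ℕ∞)}

/-- First hitting time of the set `S ⊆ ℕ` by the path `m ↦ X m ω`, valued in `ℕ∞`. -/
noncomputable def hitTime {Ω : Type*} (X : ℕ → Ω → ℕ) (S : Set ℕ) (ω : Ω) : ℕ∞ :=
  sInf ((fun m : ℕ => (m : ℕ∞)) '' {m | X m ω ∈ S})

/-- `T_∂`: the first hitting time of `0`, with value `∞` if `0` is never hit. -/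
noncomputable def hit0 {Ω : Type*} (X : ℕ → Ω → ℕ) (ω : Ω) : ℕ∞ :=
  hitTime X {0} ω

/-- `G_T^n`: the number of times `m` with `0 ≤ m ≤ T-1` and `X_m = n` (finite `T`). -/
def count {Ω : Type*} (X : ℕ → Ω → ℕ) (n : ℕ) (T : Ω → ℕ) (ω : Ω) : ℕ :=
  ((Finset.range (T ω)).filter fun m => X m ω = n).card

/-- `G_τ^n` for an `ℕ∞`-valued time `τ`, valued in `ℝ≥0∞`. -/
noncomputable def countE {Ω : Type*} (X : ℕ → Ω → ℕ) (n : ℕ) (τ : Ω → ℕ∞) (ω : Ω) : ℝ≥0∞ :=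
  ∑' m : ℕ, if (m : ℕ∞) < τ ω ∧ X m ω = n then 1 else 0

section Filtration

variable {Ω : Type*} {X : ℕ → Ω → ℕ} {T : Ω → ℕ}

lemma natFilt_mono : Monotone (natFilt X) := fun _ _ hjm =>
  biSup_mono fun i hi => by simp only [Finset.mem_range] at hi ⊢; omega

lemma IsBDStop.measurableSet_lt (hT : IsBDStop X T) (m : ℕ) :
    MeasurableSet[natFilt X m] {ω | m < T ω} := by
  have hcompl : {ω | m < T ω} = (⋃ j ∈ Set.Iic m, {ω | T ω = j})ᶜ := by
    ext ω
    simp only [Set.mem_ofPred_eq, Set.mem_compl_iff, Set.mem_iUnion, Set.mem_Iic, not_exists]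
    exact ⟨fun hlt j hj hTj => by omega, fun h => not_le.1 fun hle => h _ hle rfl⟩
  rw [hcompl]
  exact (MeasurableSet.biUnion (Set.to_countable _) fun j hj => natFilt_mono hj _ (hT j)).compl

variable [MeasurableSpace Ω]

lemma natFilt_le (hX : ∀ m, Measurable (X m)) (m : ℕ) : natFilt X m ≤ ‹MeasurableSpace Ω› :=
  iSup₂_le fun i _ => (hX i).comap_le

lemma IsBDStop.measurable (hX : ∀ m, Measurable (X m)) (hT : IsBDStop X T) : Measurable T :=
  measurable_to_countable' fun m => natFilt_le hX m _ (hT m)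

end Filtration

section Counting

variable {Ω : Type*} {X : ℕ → Ω → ℕ} {T : Ω → ℕ}

lemma card_filter_range_eq_tsum_indicator (p : ℕ → Ω → Prop) [∀ m ω, Decidable (p m ω)]
    (ω : Ω) : (#{m ∈ range (T ω) | p m ω} : ℝ≥0∞) =
      ∑' m, ({ω | m < T ω} ∩ {ω | p m ω}).indicator 1 ω := by
  rw [tsum_eq_sum (s := range (T ω)) fun m hm => Set.indicator_of_notMem
    (fun h => hm (Finset.mem_range.2 h.1)) _, Finset.card_filter, Nat.cast_sum]
  refine Finset.sum_congr rfl fun m hm => ?_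
  simp [Set.indicator_apply, Finset.mem_range.1 hm]

variable [MeasurableSpace Ω]

lemma measurableSet_lt_inter_eq (hX : ∀ m, Measurable (X m)) (hT : Measurable T) (m n : ℕ) :
    MeasurableSet ({ω | m < T ω} ∩ {ω | X m ω = n}) :=
  (measurableSet_lt measurable_const hT).inter (measurableSet_eq_fun (hX m) measurable_const)

lemma lintegral_card_filter_range (P : Measure Ω) (p : ℕ → Ω → Prop) [∀ m ω, Decidable (p m ω)]
    (hp : ∀ m, MeasurableSet ({ω | m < T ω} ∩ {ω | p m ω})) :
    ∫⁻ ω, (#{m ∈ range (T ω) | p m ω} : ℝ≥0∞) ∂P = ∑' m, P ({ω | m < T ω} ∩ {ω | p m ω}) := by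
  simp_rw [card_filter_range_eq_tsum_indicator]
  rw [lintegral_tsum fun m => (measurable_one.indicator (hp m)).aemeasurable]
  exact tsum_congr fun m => lintegral_indicator_one (hp m)

lemma lintegral_eq_tsum_measure_lt (P : Measure Ω) (hT : Measurable T) :
    ∫⁻ ω, (T ω : ℝ≥0∞) ∂P = ∑' m, P {ω | m < T ω} := by
  simpa using lintegral_card_filter_range P (T := T) (fun _ _ => True)
    fun m => by simpa using measurableSet_lt measurable_const hT

lemma integral_count (P : Measure Ω) [IsFiniteMeasure P] (hX : ∀ m, Measurable (X m))
    (hT : Measurable T) (n : ℕ) :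
    ∫ ω, (count X n T ω : ℝ) ∂P = ∑' m, P.real ({ω | m < T ω} ∩ {ω | X m ω = n}) := by
  have hmeas := measurableSet_lt_inter_eq hX hT (n := n)
  have hcount : Measurable fun ω => (count X n T ω : ℝ≥0∞) := by
    simp_rw [count, card_filter_range_eq_tsum_indicator (T := T) (fun m ω => X m ω = n)]
    exact Measurable.tsum fun m => measurable_one.indicator (hmeas m)
  simp only [measureReal_def]
  rw [← ENNReal.tsum_toReal_eq fun m => measure_ne_top P _,
    ← lintegral_card_filter_range P (fun m ω => X m ω = n) hmeas]
  change _ = (∫⁻ ω, (count X n T ω : ℝ≥0∞) ∂P).toReal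
  rw [← integral_toReal hcount.aemeasurable (ae_of_all _ fun ω => ENNReal.natCast_lt_top _)]
  simp

lemma summable_measureReal_lt_inter_eq (P : Measure Ω) [IsFiniteMeasure P]
    (hX : ∀ m, Measurable (X m)) (hT : Measurable T) (hint : ∫⁻ ω, (T ω : ℝ≥0∞) ∂P < ⊤) :
    Summable fun q : ℕ × ℕ => P.real ({ω | q.1 < T ω} ∩ {ω | X q.1 ω = q.2}) := by
  refine ENNReal.summable_toReal ?_
  have hslice : ∀ m, ∑' n, P ({ω | m < T ω} ∩ {ω | X m ω = n}) = P {ω | m < T ω} := by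
    intro m
    rw [← measure_iUnion
      (fun n n' hnn' => Set.disjoint_left.2 fun ω h h' => hnn' (h.2.symm.trans h'.2))
      (measurableSet_lt_inter_eq hX hT m), ← Set.inter_iUnion,
      Set.iUnion_eq_univ_iff.2 fun ω => ⟨X m ω, rfl⟩, Set.inter_univ]
  rw [ENNReal.tsum_prod (f := fun m n => P ({ω | m < T ω} ∩ {ω | X m ω = n})), tsum_congr hslice,
    ← lintegral_eq_tsum_measure_lt P hT]
  exact hint.ne

end Counting

section Chain

variable {Ω : Type*} [MeasurableSpace Ω] {P : Measure Ω} {X : ℕ → Ω → ℕ} {k : ℕ} {l r : ℕ → ℝ}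
  {T : Ω → ℕ}

def increment (X : ℕ → Ω → ℕ) (m : ℕ) (ω : Ω) : ℝ := (X (m + 1) ω : ℝ) - X m ω

lemma measurable_increment (hX : ∀ m, Measurable (X m)) (m : ℕ) : Measurable (increment X m) :=
  (measurable_from_top.comp (hX (m + 1))).sub (measurable_from_top.comp (hX m))

namespace IsBDChain

lemma abs_sub_le_one (hC : IsBDChain P X k l r) {n : ℕ} (hn : 1 ≤ n) : |r n - l n| ≤ 1 := by
  have := hC.lr_one n hn
  have := hC.l_pos n hn
  have := hC.r_pos n hn
  rw [abs_le]; constructor <;> linarith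

lemma ae_succ_eq_or (hC : IsBDChain P X k l r) {m n : ℕ} (hn : 1 ≤ n) :
    ∀ᵐ ω ∂P, X m ω = n → X (m + 1) ω = n + 1 ∨ X (m + 1) ω = n - 1 := by
  have := hC.isProb
  have hmeas : ∀ j i, MeasurableSet {ω | X j ω = i} := fun j i =>
    measurableSet_eq_fun (hC.meas j) measurable_const
  set s := {ω | X m ω = n}
  set up := {ω | X m ω = n ∧ X (m + 1) ω = n + 1}
  set down := {ω | X m ω = n ∧ X (m + 1) ω = n - 1}
  have hup : P up = ENNReal.ofReal (r n) * P s := by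
    simpa using hC.step_up m n hn Set.univ MeasurableSet.univ
  have hdown : P down = ENNReal.ofReal (l n) * P s := by
    simpa using hC.step_down m n hn Set.univ MeasurableSet.univ
  have hdisj : Disjoint up down := Set.disjoint_left.2 fun ω h h' => by
    have := h.2.symm.trans h'.2; omega
  -- since `r n + l n = 1`, the two moves already carry all the mass of `{X m = n}`
  have hs : P s ≤ P (up ∪ down) := by
    rw [measure_union hdisj ((hmeas m n).inter (hmeas (m + 1) (n - 1))), hup, hdown, ← add_mul,
      ← ENNReal.ofReal_add (hC.r_pos n hn).le (hC.l_pos n hn).le, add_comm, hC.lr_one n hn,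
      ENNReal.ofReal_one, one_mul]
  have hsub : up ∪ down ⊆ s := Set.union_subset (fun ω h => h.1) fun ω h => h.1
  filter_upwards [(ae_eq_of_subset_of_measure_ge hsub hs
    (((hmeas m n).inter (hmeas _ _)).union ((hmeas m n).inter (hmeas _ _))).nullMeasurableSet
    (measure_ne_top P _)).mem_iff] with ω hω hXm
  rcases hω.2 hXm with h | h
  exacts [Or.inl h.2, Or.inr h.2]

lemma ae_abs_increment_le_one (hC : IsBDChain P X k l r) :
    ∀ᵐ ω ∂P, ∀ m, |increment X m ω| ≤ 1 := by
  have hstep := ae_all_iff.2 fun m => ae_all_iff.2 fun n =>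
    hC.ae_succ_eq_or (m := m) (n := n + 1) (by omega)
  filter_upwards [hstep, hC.absorb] with ω hstep habs m
  unfold increment
  rcases hXm : X m ω with _ | n
  · simp [habs m hXm]
  · rcases hstep m n hXm with h | h <;> rw [h] <;> norm_num

lemma integrable_increment (hC : IsBDChain P X k l r) (m : ℕ) : Integrable (increment X m) P :=
  have := hC.isProb
  Integrable.of_bound (measurable_increment hC.meas m).aestronglyMeasurable 1
    (by filter_upwards [hC.ae_abs_increment_le_one] with ω h using h m)

lemma setIntegral_increment (hC : IsBDChain P X k l r) {m n : ℕ} (hn : 1 ≤ n) {A : Set Ω}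
    (hA : MeasurableSet[natFilt X m] A) :
    ∫ ω in A ∩ {ω | X m ω = n}, increment X m ω ∂P =
      (r n - l n) * P.real (A ∩ {ω | X m ω = n}) := by
  have := hC.isProb
  have hmeas : ∀ j i, MeasurableSet {ω | X j ω = i} := fun j i =>
    measurableSet_eq_fun (hC.meas j) measurable_const
  have hA' : MeasurableSet A := natFilt_le hC.meas m _ hA
  set s := A ∩ {ω | X m ω = n}
  set up := A ∩ {ω | X m ω = n ∧ X (m + 1) ω = n + 1}
  set down := A ∩ {ω | X m ω = n ∧ X (m + 1) ω = n - 1}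
  have hup_meas : MeasurableSet up := hA'.inter ((hmeas m n).inter (hmeas _ _))
  have hdown_meas : MeasurableSet down := hA'.inter ((hmeas m n).inter (hmeas _ _))
  have hsplit : s.indicator (increment X m) =ᵐ[P]
      fun ω => up.indicator 1 ω - down.indicator 1 ω := by
    filter_upwards [hC.ae_succ_eq_or (m := m) hn] with ω hω
    by_cases hs : ω ∈ s
    · obtain ⟨hωA, hXm : X m ω = n⟩ := hs
      have hne : n + 1 ≠ n - 1 := by omega
      rcases hω hXm with h | h
      · simp [increment, s, up, down, hωA, hXm, h, hne]
      · simp [increment, s, up, down, hωA, hXm, h, hne.symm, Nat.cast_sub hn]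
    · have hup : ω ∉ up := fun h => hs ⟨h.1, h.2.1⟩
      have hdown : ω ∉ down := fun h => hs ⟨h.1, h.2.1⟩
      simp [hs, hup, hdown]
  have hreal : ∀ {p : ℝ} {t : Set Ω}, 0 ≤ p → P t = ENNReal.ofReal p * P s →
      P.real t = p * P.real s := fun hp h => by
    rw [measureReal_def, h, ENNReal.toReal_mul, ENNReal.toReal_ofReal hp, measureReal_def]
  rw [← integral_indicator (hA'.inter (hmeas m n)), integral_congr_ae hsplit,
    integral_sub ((integrable_const 1).indicator hup_meas)
      ((integrable_const 1).indicator hdown_meas),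
    integral_indicator_one hup_meas, integral_indicator_one hdown_meas,
    hreal (hC.r_pos n hn).le (hC.step_up m n hn A hA),
    hreal (hC.l_pos n hn).le (hC.step_down m n hn A hA), sub_mul]

lemma setIntegral_increment_zero (hC : IsBDChain P X k l r) (m : ℕ) (A : Set Ω) :
    ∫ ω in A ∩ {ω | X m ω = 0}, increment X m ω ∂P = 0 :=
  setIntegral_eq_zero_of_ae_eq_zero <| by
    filter_upwards [hC.absorb] with ω habs hω
    have hXm : X m ω = 0 := hω.2
    simp [increment, hXm, habs m hXm]

lemma hasSum_setIntegral_increment (hC : IsBDChain P X k l r) {m : ℕ} {A : Set Ω}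
    (hA : MeasurableSet[natFilt X m] A) :
    HasSum (fun n => (r (n + 1) - l (n + 1)) * P.real (A ∩ {ω | X m ω = n + 1}))
      (∫ ω in A, increment X m ω ∂P) := by
  have hA' : MeasurableSet A := natFilt_le hC.meas m _ hA
  have h := hasSum_integral_iUnion (μ := P) (f := increment X m)
    (s := fun n => A ∩ {ω | X m ω = n})
    (fun n => hA'.inter (measurableSet_eq_fun (hC.meas m) measurable_const))
    (fun n n' hnn' => Set.disjoint_left.2 fun ω h h' => hnn' (h.2.symm.trans h'.2))
    (hC.integrable_increment m).integrableOn
  rw [← Set.inter_iUnion, Set.iUnion_eq_univ_iff.2 fun ω => ⟨X m ω, rfl⟩, Set.inter_univ,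
    ← hasSum_nat_add_iff' 1, Finset.sum_range_one, hC.setIntegral_increment_zero, sub_zero] at h
  rwa [funext fun n => hC.setIntegral_increment (n := n + 1) (by omega) hA] at h

lemma lintegral_enorm_indicator_increment_le (hC : IsBDChain P X k l r) (m : ℕ) {A : Set Ω}
    (hA : MeasurableSet A) : ∫⁻ ω, ‖A.indicator (increment X m) ω‖ₑ ∂P ≤ P A := by
  calc ∫⁻ ω, ‖A.indicator (increment X m) ω‖ₑ ∂P ≤ ∫⁻ ω, A.indicator 1 ω ∂P := by
        refine lintegral_mono_ae ?_
        filter_upwards [hC.ae_abs_increment_le_one] with ω h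
        by_cases hω : ω ∈ A
        · simpa [hω, Real.enorm_eq_ofReal_abs] using h m
        · simp [hω]
    _ = P A := lintegral_indicator_one hA

lemma integrable_stopped_sub_init (hC : IsBDChain P X k l r) (hT : Measurable T)
    (hint : ∫⁻ ω, (T ω : ℝ≥0∞) ∂P < ⊤) :
    Integrable (fun ω => (X (T ω) ω : ℝ) - X 0 ω) P := by
  have hXT : Measurable fun ω => X (T ω) ω :=
    (measurable_from_prod_countable_left (f := fun p : Ω × ℕ => X p.2 p.1)
      fun m => hC.meas m).comp (measurable_id.prodMk hT)
  have hTint : Integrable (fun ω => (T ω : ℝ)) P := by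
    simpa using integrable_toReal_of_lintegral_ne_top
      (measurable_from_top.comp hT).aemeasurable hint.ne
  refine hTint.mono' ((measurable_from_top.comp hXT).sub
    (measurable_from_top.comp (hC.meas 0))).aestronglyMeasurable ?_
  filter_upwards [hC.ae_abs_increment_le_one] with ω h
  rw [Real.norm_eq_abs, ← Finset.sum_range_sub (fun m => (X m ω : ℝ))]
  calc |∑ m ∈ range (T ω), increment X m ω| ≤ ∑ m ∈ range (T ω), |increment X m ω| :=
        Finset.abs_sum_le_sum_abs _ _
    _ ≤ ∑ m ∈ range (T ω), 1 := Finset.sum_le_sum fun m _ => h m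
    _ = T ω := by simp

lemma integral_stopped_sub_init (hC : IsBDChain P X k l r) (hT : Measurable T)
    (hint : ∫⁻ ω, (T ω : ℝ≥0∞) ∂P < ⊤) :
    ∫ ω, ((X (T ω) ω : ℝ) - X 0 ω) ∂P = ∑' m, ∫ ω in {ω | m < T ω}, increment X m ω ∂P := by
  have hlt : ∀ m, MeasurableSet {ω | m < T ω} := fun m => measurableSet_lt measurable_const hT
  have htele : ∀ ω, (X (T ω) ω : ℝ) - X 0 ω =
      ∑' m, {ω | m < T ω}.indicator (increment X m) ω := by
    intro ω
    rw [tsum_eq_sum (s := range (T ω)) fun m hm =>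
      Set.indicator_of_notMem (by simpa using hm) _, ← Finset.sum_range_sub (fun m => (X m ω : ℝ))]
    exact Finset.sum_congr rfl fun m hm =>
      (Set.indicator_of_mem (s := {ω | m < T ω}) (Finset.mem_range.1 hm) (increment X m)).symm
  simp_rw [htele, ← integral_indicator (hlt _)]
  refine integral_tsum
    (fun m => ((measurable_increment hC.meas m).indicator (hlt m)).aestronglyMeasurable)
    (ne_top_of_le_ne_top ?_ (ENNReal.tsum_le_tsum fun m =>
      hC.lintegral_enorm_indicator_increment_le m (hlt m)))
  rw [← lintegral_eq_tsum_measure_lt P hT]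
  exact hint.ne

lemma integral_stopped (hC : IsBDChain P X k l r) (hT : Measurable T)
    (hint : ∫⁻ ω, (T ω : ℝ≥0∞) ∂P < ⊤) :
    ∫ ω, (X (T ω) ω : ℝ) ∂P = k + ∑' m, ∫ ω in {ω | m < T ω}, increment X m ω ∂P := by
  have := hC.isProb
  have hinit : (fun ω => (X 0 ω : ℝ)) =ᵐ[P] fun _ => (k : ℝ) := by
    filter_upwards [hC.init] with ω h using by rw [h]
  calc ∫ ω, (X (T ω) ω : ℝ) ∂P = ∫ ω, ((X 0 ω : ℝ) + ((X (T ω) ω : ℝ) - X 0 ω)) ∂P := by simp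
    _ = k + ∑' m, ∫ ω in {ω | m < T ω}, increment X m ω ∂P := by
      rw [integral_add ((integrable_const (k : ℝ)).congr hinit.symm)
        (hC.integrable_stopped_sub_init hT hint), integral_congr_ae hinit,
        hC.integral_stopped_sub_init hT hint]
      simp

lemma summable_drift_mul_measureReal (hC : IsBDChain P X k l r) (hT : Measurable T)
    (hint : ∫⁻ ω, (T ω : ℝ≥0∞) ∂P < ⊤) :
    Summable (Function.uncurry fun m n =>
      (r (n + 1) - l (n + 1)) * P.real ({ω | m < T ω} ∩ {ω | X m ω = n + 1})) := by
  have := hC.isProb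
  have hinj : Function.Injective fun q : ℕ × ℕ => (q.1, q.2 + 1) := fun q q' h => by
    simp only [Prod.mk.injEq, add_left_inj] at h
    exact Prod.ext h.1 h.2
  refine ((summable_measureReal_lt_inter_eq P hC.meas hT hint).comp_injective hinj).of_norm_bounded
    fun q => ?_
  rw [Real.norm_eq_abs, Function.uncurry_apply_pair, abs_mul, abs_of_nonneg measureReal_nonneg]
  exact mul_le_of_le_one_left measureReal_nonneg (hC.abs_sub_le_one (by omega))

end IsBDChain

end Chain

/-- For a stopping time `T` with `E[T] < ∞`,
`E[X_T] = k + Σ_{n=1}^∞ E[G_T^n] (r_n - l_n)`. -/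
theorem stmt3 {Ω : Type*} [MeasurableSpace Ω] (P : Measure Ω) (X : ℕ → Ω → ℕ)
    (k : ℕ) (l r : ℕ → ℝ) (hC : IsBDChain P X k l r)
    (T : Ω → ℕ) (hstop : IsBDStop X T)
    (hint : ∫⁻ ω, (T ω : ℝ≥0∞) ∂P < ⊤) :
    ∫ ω, (X (T ω) ω : ℝ) ∂P =
      k + ∑' n : ℕ, (∫ ω, (count X (n + 1) T ω : ℝ) ∂P) * (r (n + 1) - l (n + 1)) := by
  have := hC.isProb
  have hT := hstop.measurable hC.meas
  rw [hC.integral_stopped hT hint]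
  congr 1
  calc ∑' m, ∫ ω in {ω | m < T ω}, increment X m ω ∂P
      = ∑' m, ∑' n, (r (n + 1) - l (n + 1)) * P.real ({ω | m < T ω} ∩ {ω | X m ω = n + 1}) :=
        tsum_congr fun m =>
          (hC.hasSum_setIntegral_increment (hstop.measurableSet_lt m)).tsum_eq.symm
    _ = ∑' n, ∑' m, (r (n + 1) - l (n + 1)) * P.real ({ω | m < T ω} ∩ {ω | X m ω = n + 1}) :=
        (hC.summable_drift_mul_measureReal hT hint).tsum_comm.symm
    _ = _ := tsum_congr fun n => by rw [tsum_mul_left, integral_count P hC.meas hT, mul_comm]
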